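/- arXiv:2408.11683 — 2 statements merged into one kernel-verified Lean document; each statement's English description precedes it below -/
import Mathlib

section
/- Let L_1,…,L_M be elements of a Banach algebra with ‖L_k‖ ≤ Λ for all k, let L = ∑_k L_k, τ ≥ 0, and define the forward product S→(τ) = exp(τL_1)⋯exp(τL_M) and backward product S←(τ) = exp(τL_M)⋯exp(τL_1). Then ‖exp(τL) − (1/2)(S→(τ) + S←(τ))‖ ≤ 2·(MτΛ)³/3! · exp(MτΛ). -/
open NormedSpace

section aux
open Finset

variable {A : Type*}

section alg
variable [Ring A] [Algebra ℝ A]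

/-- The exponential power series of `a` as a formal power series. -/
noncomputable def ePS (a : A) : PowerSeries A :=
  PowerSeries.mk fun n => ((n.factorial : ℝ))⁻¹ • a ^ n

/-- Product of the exponential power series of the elements of a list. -/
noncomputable def QPS (l : List A) : PowerSeries A := (l.map ePS).prod

@[simp] lemma coeff_ePS (a : A) (n : ℕ) :
    PowerSeries.coeff n (ePS a) = ((n.factorial : ℝ))⁻¹ • a ^ n :=
  PowerSeries.coeff_mk _ _

@[simp] lemma QPS_nil : QPS ([] : List A) = 1 := rfl

lemma QPS_cons (a : A) (t : List A) : QPS (a :: t) = ePS a * QPS t := by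
  simp [QPS]

lemma QPS_append (u v : List A) : QPS (u ++ v) = QPS u * QPS v := by
  simp [QPS]

lemma QPS_singleton (a : A) : QPS [a] = ePS a := by simp [QPS]

lemma coeff_zero_QPS (l : List A) : PowerSeries.coeff 0 (QPS l) = 1 := by
  induction l with
  | nil => simp
  | cons a t ih => simp [QPS_cons, PowerSeries.coeff_mul, ih]

lemma coeff_one_QPS (l : List A) : PowerSeries.coeff 1 (QPS l) = l.sum := by
  induction l with
  | nil => simp
  | cons a t ih =>
      rw [QPS_cons, PowerSeries.coeff_mul,
        Finset.Nat.sum_antidiagonal_eq_sum_range_succ_mk]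
      simp [Finset.sum_range_succ, ih, coeff_zero_QPS, add_comm]

lemma coeff_two_cons (a : A) (t : List A) :
    PowerSeries.coeff 2 (QPS (a :: t))
      = PowerSeries.coeff 2 (QPS t) + a * t.sum + (2 : ℝ)⁻¹ • a ^ 2 := by
  rw [QPS_cons, PowerSeries.coeff_mul,
    Finset.Nat.sum_antidiagonal_eq_sum_range_succ_mk]
  simp [Finset.sum_range_succ, coeff_zero_QPS, coeff_one_QPS, Nat.factorial]

lemma coeff_two_concat (a : A) (t : List A) :
    PowerSeries.coeff 2 (QPS (t ++ [a]))
      = PowerSeries.coeff 2 (QPS t) + t.sum * a + (2 : ℝ)⁻¹ • a ^ 2 := by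
  rw [QPS_append, QPS_singleton, PowerSeries.coeff_mul,
    Finset.Nat.sum_antidiagonal_eq_sum_range_succ_mk]
  simp [Finset.sum_range_succ, coeff_zero_QPS, coeff_one_QPS, Nat.factorial,
    mul_smul_comm]
  abel

lemma coeff_two_symm (l : List A) :
    PowerSeries.coeff 2 (QPS l) + PowerSeries.coeff 2 (QPS l.reverse)
      = l.sum ^ 2 := by
  induction l with
  | nil => simp
  | cons a t ih =>
      have h2 : (2 : ℝ)⁻¹ • a ^ 2 + (2 : ℝ)⁻¹ • a ^ 2 = a ^ 2 := by
        rw [← add_smul]; norm_num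
      rw [List.reverse_cons, coeff_two_cons, coeff_two_concat, List.sum_reverse]
      calc PowerSeries.coeff 2 (QPS t) + a * t.sum + (2 : ℝ)⁻¹ • a ^ 2 +
            (PowerSeries.coeff 2 (QPS t.reverse) + t.sum * a + (2 : ℝ)⁻¹ • a ^ 2)
          = (PowerSeries.coeff 2 (QPS t) + PowerSeries.coeff 2 (QPS t.reverse))
              + (a * t.sum + t.sum * a + ((2 : ℝ)⁻¹ • a ^ 2 + (2 : ℝ)⁻¹ • a ^ 2)) := by
            abel
        _ = t.sum ^ 2 + (a * t.sum + t.sum * a + a ^ 2) := by rw [ih, h2]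
        _ = (a :: t).sum ^ 2 := by
            simp only [List.sum_cons]
            noncomm_ring

end alg

/-- An elementary binomial identity for real numbers. -/
lemma real_conv (x y : ℝ) (n : ℕ) :
    ∑ p ∈ Finset.HasAntidiagonal.antidiagonal n,
        x ^ p.1 / p.1.factorial * (y ^ p.2 / p.2.factorial)
      = (x + y) ^ n / n.factorial := by
  rw [Finset.Nat.sum_antidiagonal_eq_sum_range_succ_mk, add_pow, Finset.sum_div]
  refine Finset.sum_congr rfl fun i hi => ?_
  rw [Finset.mem_range, Nat.lt_succ_iff] at hi
  rw [Nat.cast_choose ℝ hi]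
  have h1 : (i.factorial : ℝ) ≠ 0 := Nat.cast_ne_zero.2 i.factorial_ne_zero
  have h2 : ((n - i).factorial : ℝ) ≠ 0 := Nat.cast_ne_zero.2 (n - i).factorial_ne_zero
  have h3 : (n.factorial : ℝ) ≠ 0 := Nat.cast_ne_zero.2 n.factorial_ne_zero
  field_simp

section normed
variable [NormedRing A] [NormedAlgebra ℝ A]

lemma norm_coeff_ePS_le {a : A} {x : ℝ} (ha : ‖a‖ ≤ x) {i : ℕ} (hi : 1 ≤ i) :
    ‖PowerSeries.coeff i (ePS a)‖ ≤ x ^ i / i.factorial := by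
  rw [coeff_ePS, norm_smul]
  have h1 : ‖a ^ i‖ ≤ x ^ i :=
    (norm_pow_le' a hi).trans (pow_le_pow_left₀ (norm_nonneg a) ha i)
  have h2 : ‖((i.factorial : ℝ))⁻¹‖ = ((i.factorial : ℝ))⁻¹ := by
    rw [Real.norm_eq_abs, abs_of_nonneg (by positivity)]
  rw [h2, div_eq_inv_mul]
  exact mul_le_mul_of_nonneg_left h1 (by positivity)

lemma norm_coeff_QPS_le {x : ℝ} (l : List A) (hl : ∀ a ∈ l, ‖a‖ ≤ x)
    {n : ℕ} (hn : 1 ≤ n) :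
    ‖PowerSeries.coeff n (QPS l)‖ ≤ ((l.length : ℝ) * x) ^ n / n.factorial := by
  induction l generalizing n with
  | nil =>
      rw [QPS_nil, PowerSeries.coeff_one, if_neg (by omega)]
      simp [zero_pow (show n ≠ 0 by omega)]
  | cons a t ih =>
      have hax : ‖a‖ ≤ x := hl a (List.mem_cons_self)
      have hx : 0 ≤ x := (norm_nonneg a).trans hax
      have ht : ∀ b ∈ t, ‖b‖ ≤ x := fun b hb => hl b (List.mem_cons_of_mem a hb)
      rw [QPS_cons, PowerSeries.coeff_mul]
      have key : ∀ p ∈ Finset.HasAntidiagonal.antidiagonal n,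
          ‖PowerSeries.coeff p.1 (ePS a) * PowerSeries.coeff p.2 (QPS t)‖
            ≤ x ^ p.1 / p.1.factorial *
                (((t.length : ℝ) * x) ^ p.2 / p.2.factorial) := by
        intro p hp
        rw [Finset.HasAntidiagonal.mem_antidiagonal] at hp
        rcases Nat.eq_zero_or_pos p.1 with h1 | h1
        · have hp2 : 1 ≤ p.2 := by omega
          rw [h1]
          simp only [coeff_ePS, pow_zero, Nat.factorial_zero, Nat.cast_one, inv_one,
            one_smul, one_mul, div_one]
          exact ih ht hp2
        · rcases Nat.eq_zero_or_pos p.2 with h2 | h2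
          · rw [h2, coeff_zero_QPS, mul_one]
            simp only [pow_zero, Nat.factorial_zero, Nat.cast_one, div_one, mul_one]
            exact norm_coeff_ePS_le hax h1
          · refine (norm_mul_le _ _).trans ?_
            exact mul_le_mul (norm_coeff_ePS_le hax h1) (ih ht h2)
              (norm_nonneg _) (by positivity)
      refine (norm_sum_le _ _).trans ((Finset.sum_le_sum key).trans_eq ?_)
      rw [real_conv]
      congr 2
      simp only [List.length_cons]
      push_cast
      ring

lemma summable_norm_coeff_ePS (a : A) :
    Summable fun n => ‖PowerSeries.coeff n (ePS a)‖ := by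
  rw [← summable_nat_add_iff 1]
  refine Summable.of_nonneg_of_le (fun _ => norm_nonneg _)
    (fun n => norm_coeff_ePS_le le_rfl (by omega)) ?_
  exact (summable_nat_add_iff 1).2 (Real.summable_pow_div_factorial ‖a‖)

lemma summable_norm_coeff_QPS {x : ℝ} (l : List A) (hl : ∀ a ∈ l, ‖a‖ ≤ x) :
    Summable fun n => ‖PowerSeries.coeff n (QPS l)‖ := by
  rw [← summable_nat_add_iff 1]
  refine Summable.of_nonneg_of_le (fun _ => norm_nonneg _)
    (fun n => norm_coeff_QPS_le l hl (by omega)) ?_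
  exact (summable_nat_add_iff 1).2
    (Real.summable_pow_div_factorial ((l.length : ℝ) * x))

lemma hasSum_coeff_QPS [CompleteSpace A] {x : ℝ} (l : List A)
    (hl : ∀ a ∈ l, ‖a‖ ≤ x) :
    HasSum (fun n => PowerSeries.coeff n (QPS l)) ((l.map (exp)).prod) := by
  induction l with
  | nil =>
      simp only [QPS_nil, PowerSeries.coeff_one, List.map_nil, List.prod_nil]
      exact hasSum_ite_eq 0 1
  | cons a t ih =>
      have ht : ∀ b ∈ t, ‖b‖ ≤ x := fun b hb => hl b (List.mem_cons_of_mem a hb)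
      have hQt := summable_norm_coeff_QPS t ht
      have hea := summable_norm_coeff_ePS a
      have hs : Summable fun n => PowerSeries.coeff n (QPS (a :: t)) :=
        (summable_norm_coeff_QPS (a :: t) hl).of_norm
      rw [hs.hasSum_iff]
      calc ∑' n, PowerSeries.coeff n (QPS (a :: t))
          = ∑' n, ∑ p ∈ Finset.HasAntidiagonal.antidiagonal n,
              PowerSeries.coeff p.1 (ePS a) * PowerSeries.coeff p.2 (QPS t) :=
            tsum_congr fun n => by rw [QPS_cons, PowerSeries.coeff_mul]
        _ = (∑' n, PowerSeries.coeff n (ePS a)) *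
              (∑' n, PowerSeries.coeff n (QPS t)) :=
            (tsum_mul_tsum_eq_tsum_sum_antidiagonal_of_summable_norm hea hQt).symm
        _ = (List.map (exp) (a :: t)).prod := by
            rw [(ih ht).tsum_eq, List.map_cons, List.prod_cons]
            congr 1
            rw [exp_eq_tsum ℝ]
            exact tsum_congr fun n => by rw [coeff_ePS]

end normed

end aux

theorem first_order_randomised_step_bound
    {A : Type*} [NormedRing A] [NormedAlgebra ℝ A] [CompleteSpace A]
    (M : ℕ) (L : Fin M → A) (Λ τ : ℝ) (hτ : 0 ≤ τ)
    (hL : ∀ k, ‖L k‖ ≤ Λ) :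
    ‖exp (τ • ∑ k, L k)
        - (1 / 2 : ℝ) • ((List.ofFn fun k => exp (τ • L k)).prod
            + (List.ofFn fun k => exp (τ • L k)).reverse.prod)‖
      ≤ 2 * ((M : ℝ) * τ * Λ) ^ 3 / (Nat.factorial 3 : ℝ)
          * Real.exp ((M : ℝ) * τ * Λ) := by
  rcases Nat.eq_zero_or_pos M with hM | hM
  · subst hM
    have h1 : (List.ofFn fun k : Fin 0 => exp (τ • L k)) = [] := List.ofFn_zero
    have h2 : (∑ k : Fin 0, L k) = 0 := by simp
    rw [h1, h2, smul_zero, exp_zero]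
    simp only [List.prod_nil, List.reverse_nil]
    have : (1 / 2 : ℝ) • ((1 : A) + 1) = 1 := by
      rw [← two_smul ℝ (1 : A), smul_smul]
      norm_num
    rw [this, sub_self, norm_zero]
    simp only [Nat.cast_zero, zero_mul]
    norm_num
  · -- main case
    have hΛ : 0 ≤ Λ := (norm_nonneg (L ⟨0, hM⟩)).trans (hL _)
    set x : ℝ := τ * Λ with hxdef
    have hx : 0 ≤ x := mul_nonneg hτ hΛ
    set l : List A := List.ofFn fun k => τ • L k with hldef
    have hlen : l.length = M := List.length_ofFn
    have hl : ∀ a ∈ l, ‖a‖ ≤ x := by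
      intro a ha
      rw [hldef, List.mem_ofFn] at ha
      obtain ⟨k, rfl⟩ := ha
      rw [norm_smul, Real.norm_eq_abs, abs_of_nonneg hτ]
      exact mul_le_mul_of_nonneg_left (hL k) hτ
    have hlrev : ∀ a ∈ l.reverse, ‖a‖ ≤ x := fun a ha => hl a (List.mem_reverse.1 ha)
    set y : ℝ := (M : ℝ) * x with hydef
    have hy : 0 ≤ y := mul_nonneg (Nat.cast_nonneg M) hx
    have hsum : l.sum = τ • ∑ k, L k := by
      rw [hldef, List.sum_ofFn, Finset.smul_sum]
    have hnorms : ‖l.sum‖ ≤ y := by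
      rw [hldef, List.sum_ofFn]
      refine (norm_sum_le _ _).trans ?_
      have : ∀ k : Fin M, ‖τ • L k‖ ≤ x := by
        intro k
        rw [norm_smul, Real.norm_eq_abs, abs_of_nonneg hτ]
        exact mul_le_mul_of_nonneg_left (hL k) hτ
      calc ∑ k : Fin M, ‖τ • L k‖ ≤ ∑ _k : Fin M, x := Finset.sum_le_sum fun k _ => this k
        _ = y := by rw [Finset.sum_const, Finset.card_univ, Fintype.card_fin, nsmul_eq_mul, hydef]
    -- identify the two products
    have hmapF : (List.ofFn fun k => exp (τ • L k)) = l.map (exp) := by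
      rw [hldef, List.map_ofFn]
      rfl
    have hmapB : (List.ofFn fun k => exp (τ • L k)).reverse = l.reverse.map (exp) := by
      rw [hmapF, List.map_reverse]
    -- the three HasSum statements
    have hexp : HasSum (fun n => ((n.factorial : ℝ))⁻¹ • l.sum ^ n)
        (exp (τ • ∑ k, L k)) := by
      rw [← hsum]
      exact exp_series_hasSum_exp' l.sum
    have hF := hasSum_coeff_QPS l hl
    have hB := hasSum_coeff_QPS l.reverse hlrev
    set d : ℕ → A := fun n => ((n.factorial : ℝ))⁻¹ • l.sum ^ n
      - (1 / 2 : ℝ) • (PowerSeries.coeff n (QPS l)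
          + PowerSeries.coeff n (QPS l.reverse)) with hddef
    set T : A := exp (τ • ∑ k, L k)
      - (1 / 2 : ℝ) • ((List.ofFn fun k => exp (τ • L k)).prod
          + (List.ofFn fun k => exp (τ • L k)).reverse.prod) with hTdef
    have hdT : HasSum d T := by
      rw [hTdef, hmapB, hmapF]
      exact hexp.sub ((hF.add hB).const_smul (1 / 2 : ℝ))
    -- the first three terms vanish
    have hd0 : d 0 = 0 := by
      have h11 : (1 / 2 : ℝ) • (1 : A) + (1 / 2 : ℝ) • (1 : A) = 1 := by
        rw [← add_smul]; norm_num
      simp only [hddef, Nat.factorial_zero, Nat.cast_one, inv_one, one_smul, pow_zero,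
        coeff_zero_QPS, smul_add, h11, sub_self]
    have hd1 : d 1 = 0 := by
      simp only [hddef, Nat.factorial_one, Nat.cast_one, inv_one, one_smul, pow_one,
        coeff_one_QPS, List.sum_reverse]
      rw [← two_smul ℝ l.sum, smul_smul]
      norm_num
    have hd2 : d 2 = 0 := by
      simp only [hddef, coeff_two_symm]
      rw [show ((Nat.factorial 2 : ℕ) : ℝ)⁻¹ = (1 / 2 : ℝ) by norm_num [Nat.factorial]]
      rw [sub_self]
    have hd3 : HasSum (fun n => d (n + 3)) T := by
      have : (∑ i ∈ Finset.range 3, d i) = 0 := by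
        rw [Finset.sum_range_succ, Finset.sum_range_succ, Finset.sum_range_one,
          hd0, hd1, hd2]
        simp
      have h := (hasSum_nat_add_iff' (f := d) (g := T) 3).2 hdT
      rwa [this, sub_zero] at h
    -- termwise bound
    have hbound : ∀ m : ℕ, 1 ≤ m → ‖d m‖ ≤ 2 * (y ^ m / m.factorial) := by
      intro m hm
      have hpow : ‖((m.factorial : ℝ))⁻¹ • l.sum ^ m‖ ≤ y ^ m / m.factorial := by
        rw [norm_smul, Real.norm_eq_abs, abs_of_nonneg (by positivity), div_eq_inv_mul]
        refine mul_le_mul_of_nonneg_left ?_ (by positivity)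
        exact (norm_pow_le' l.sum hm).trans (pow_le_pow_left₀ (norm_nonneg _) hnorms m)
      have hcF : ‖PowerSeries.coeff m (QPS l)‖ ≤ y ^ m / m.factorial := by
        have := norm_coeff_QPS_le l hl hm
        rwa [hlen] at this
      have hcB : ‖PowerSeries.coeff m (QPS l.reverse)‖ ≤ y ^ m / m.factorial := by
        have := norm_coeff_QPS_le l.reverse hlrev hm
        rwa [List.length_reverse, hlen] at this
      calc ‖d m‖ ≤ ‖((m.factorial : ℝ))⁻¹ • l.sum ^ m‖
            + ‖(1 / 2 : ℝ) • (PowerSeries.coeff m (QPS l)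
                + PowerSeries.coeff m (QPS l.reverse))‖ := norm_sub_le _ _
        _ ≤ y ^ m / m.factorial + (1 / 2 : ℝ) * (y ^ m / m.factorial + y ^ m / m.factorial) := by
            refine add_le_add hpow ?_
            rw [norm_smul, Real.norm_eq_abs, abs_of_nonneg (by norm_num)]
            exact mul_le_mul_of_nonneg_left
              ((norm_add_le _ _).trans (add_le_add hcF hcB)) (by norm_num)
        _ = 2 * (y ^ m / m.factorial) := by ring
    have hfact : ∀ n : ℕ, (6 : ℝ) * n.factorial ≤ (n + 3).factorial := by
      intro n
      have h := Nat.le_of_dvd (Nat.factorial_pos (n + 3))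
        (Nat.factorial_mul_factorial_dvd_factorial_add n 3)
      have : (↑(n.factorial * Nat.factorial 3) : ℝ) ≤ ((n + 3).factorial : ℝ) :=
        Nat.cast_le.2 h
      rw [Nat.cast_mul] at this
      calc (6 : ℝ) * n.factorial = (n.factorial : ℝ) * (Nat.factorial 3 : ℕ) := by
            norm_num [Nat.factorial]; ring
        _ ≤ ((n + 3).factorial : ℝ) := this
    have hterm : ∀ n : ℕ, ‖d (n + 3)‖ ≤ 2 * y ^ 3 / 6 * (y ^ n / n.factorial) := by
      intro n
      refine (hbound (n + 3) (by omega)).trans ?_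
      have h1 : y ^ (n + 3) = y ^ 3 * y ^ n := by rw [← pow_add]; ring_nf
      have h2 : y ^ (n + 3) / ((n + 3).factorial : ℝ)
          ≤ y ^ (n + 3) / (6 * n.factorial) := by
        apply div_le_div_of_nonneg_left (by positivity) (by positivity) (hfact n)
      calc 2 * (y ^ (n + 3) / ((n + 3).factorial : ℝ))
          ≤ 2 * (y ^ (n + 3) / (6 * n.factorial)) := by linarith
        _ = 2 * y ^ 3 / 6 * (y ^ n / n.factorial) := by
            rw [h1]; field_simp
    have hg : Summable fun n : ℕ => 2 * y ^ 3 / 6 * (y ^ n / n.factorial) :=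
      (Real.summable_pow_div_factorial y).mul_left _
    have hnd : Summable fun n => ‖d (n + 3)‖ :=
      Summable.of_nonneg_of_le (fun _ => norm_nonneg _) hterm hg
    have hTle : ‖T‖ ≤ ∑' n, ‖d (n + 3)‖ := by
      rw [← hd3.tsum_eq]
      exact norm_tsum_le_tsum_norm hnd
    have hsum_le : (∑' n, ‖d (n + 3)‖) ≤ 2 * y ^ 3 / 6 * Real.exp y := by
      have : (∑' n : ℕ, 2 * y ^ 3 / 6 * (y ^ n / n.factorial))
          = 2 * y ^ 3 / 6 * Real.exp y := by
        rw [tsum_mul_left, Real.exp_eq_exp_ℝ, exp_eq_tsum_div]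
      rw [← this]
      exact Summable.tsum_le_tsum hterm hnd hg
    have hfinal : ‖T‖ ≤ 2 * y ^ 3 / 6 * Real.exp y := hTle.trans hsum_le
    have hyeq : y = (M : ℝ) * τ * Λ := by rw [hydef, hxdef]; ring
    calc ‖T‖ ≤ 2 * y ^ 3 / 6 * Real.exp y := hfinal
      _ = 2 * ((M : ℝ) * τ * Λ) ^ 3 / (Nat.factorial 3 : ℝ)
          * Real.exp ((M : ℝ) * τ * Λ) := by
        rw [hyeq]; norm_num [Nat.factorial]
end

section
/- With L = ∑_{k=1}^M L_k, ‖L_k‖ ≤ Λ, τ ≥ 0, and S₁(τ) = exp(τL_1)⋯exp(τL_M) the first-order Trotter product, we have ‖exp(τL) − S₁(τ)‖ ≤ 2·(MτΛ)²/2 · exp(MτΛ) = (MτΛ)²·exp(MτΛ). -/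
open NormedSpace Nat

/-- Real exponential as a power series. -/
lemma real_exp_eq_tsum (x : ℝ) : Real.exp x = ∑' n : ℕ, x ^ n / n ! := by
  rw [Real.exp_eq_exp_ℝ, exp_eq_tsum_div]

/-- Second-order tail bound for exp in a Banach algebra. -/
lemma norm_exp_sub_one_sub_le
    {A : Type*} [NormedRing A] [NormedAlgebra ℝ A] [CompleteSpace A] (a : A) :
    ‖exp a - 1 - a‖ ≤ Real.exp ‖a‖ - 1 - ‖a‖ := by
  have hs : Summable fun n : ℕ => ((n ! : ℝ))⁻¹ • a ^ n := expSeries_summable' (𝕂 := ℝ) a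
  have hs1 : Summable fun n : ℕ => (((n + 1)! : ℝ))⁻¹ • a ^ (n + 1) :=
    (summable_nat_add_iff (f := fun n : ℕ => ((n ! : ℝ))⁻¹ • a ^ n) 1).mpr hs
  have hs2 : Summable fun n : ℕ => (((n + 2)! : ℝ))⁻¹ • a ^ (n + 2) :=
    (summable_nat_add_iff (f := fun n : ℕ => ((n ! : ℝ))⁻¹ • a ^ n) 2).mpr hs
  have he : exp a - 1 - a = ∑' n : ℕ, (((n + 2)! : ℝ))⁻¹ • a ^ (n + 2) := by
    have h0 : exp a = ∑' n : ℕ, ((n ! : ℝ))⁻¹ • a ^ n := by rw [exp_eq_tsum ℝ]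
    rw [h0, Summable.tsum_eq_zero_add hs, Summable.tsum_eq_zero_add hs1]
    have e0 : ((0 ! : ℝ))⁻¹ • a ^ 0 = 1 := by
      simp
    have e1 : (((0 + 1)! : ℝ))⁻¹ • a ^ (0 + 1) = a := by
      simp
    rw [e0, e1]
    have : (fun n : ℕ => (((n + 1 + 1)! : ℝ))⁻¹ • a ^ (n + 1 + 1))
        = fun n : ℕ => (((n + 2)! : ℝ))⁻¹ • a ^ (n + 2) := rfl
    rw [this]
    abel
  have hrs : Summable fun n : ℕ => ‖a‖ ^ n / n ! := Real.summable_pow_div_factorial ‖a‖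
  have hrs1 : Summable fun n : ℕ => ‖a‖ ^ (n + 1) / (n + 1)! := (summable_nat_add_iff (f := fun n : ℕ => ‖a‖ ^ n / n !) 1).mpr hrs
  have hrs2 : Summable fun n : ℕ => ‖a‖ ^ (n + 2) / (n + 2)! := (summable_nat_add_iff (f := fun n : ℕ => ‖a‖ ^ n / n !) 2).mpr hrs
  have hre : Real.exp ‖a‖ - 1 - ‖a‖ = ∑' n : ℕ, ‖a‖ ^ (n + 2) / (n + 2)! := by
    rw [real_exp_eq_tsum, Summable.tsum_eq_zero_add hrs, Summable.tsum_eq_zero_add hrs1]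
    have e0 : ‖a‖ ^ 0 / (0 ! : ℝ) = 1 := by simp
    have e1 : ‖a‖ ^ (0 + 1) / ((0 + 1)! : ℝ) = ‖a‖ := by simp
    rw [e0, e1]
    have : (fun n : ℕ => ‖a‖ ^ (n + 1 + 1) / ((n + 1 + 1)! : ℝ))
        = fun n : ℕ => ‖a‖ ^ (n + 2) / ((n + 2)! : ℝ) := rfl
    rw [this]
    ring
  rw [he, hre]
  have hnorm : Summable fun n : ℕ => ‖(((n + 2)! : ℝ))⁻¹ • a ^ (n + 2)‖ :=
    (summable_nat_add_iff (f := fun n : ℕ => ‖((n ! : ℝ))⁻¹ • a ^ n‖) 2).mpr (norm_expSeries_summable' (𝕂 := ℝ) a)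
  calc ‖∑' n : ℕ, (((n + 2)! : ℝ))⁻¹ • a ^ (n + 2)‖
      ≤ ∑' n : ℕ, ‖(((n + 2)! : ℝ))⁻¹ • a ^ (n + 2)‖ := norm_tsum_le_tsum_norm hnorm
    _ ≤ ∑' n : ℕ, ‖a‖ ^ (n + 2) / (n + 2)! := by
        refine hnorm.tsum_le_tsum (fun n => ?_) hrs2
        rw [norm_smul, norm_inv, Real.norm_natCast, div_eq_inv_mul]
        have h1 : ‖a ^ (n + 2)‖ ≤ ‖a‖ ^ (n + 2) := norm_pow_le' a (Nat.succ_pos _)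
        exact mul_le_mul_of_nonneg_left h1 (by positivity)

/-- Monotone real bound for the tail. -/
lemma tail_mono {x u : ℝ} (hx : 0 ≤ x) (hxu : x ≤ u) :
    Real.exp x - 1 - x ≤ Real.exp u - 1 - u := by
  have h1 : 1 ≤ Real.exp x := Real.one_le_exp hx
  have h2 : (u - x) + 1 ≤ Real.exp (u - x) := Real.add_one_le_exp _
  have h3 : Real.exp u = Real.exp x * Real.exp (u - x) := by
    rw [← Real.exp_add]; ring_nf
  nlinarith [Real.exp_pos x]

/-- tail vs s^2/2 exp s -/
lemma real_tail_le (s : ℝ) (hs : 0 ≤ s) :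
    Real.exp s - 1 - s ≤ s ^ 2 / 2 * Real.exp s := by
  have hrs : Summable fun n : ℕ => s ^ n / n ! := Real.summable_pow_div_factorial s
  have hrs1 : Summable fun n : ℕ => s ^ (n + 1) / (n + 1)! :=
    (summable_nat_add_iff (f := fun n : ℕ => s ^ n / n !) 1).mpr hrs
  have hrs2 : Summable fun n : ℕ => s ^ (n + 2) / (n + 2)! :=
    (summable_nat_add_iff (f := fun n : ℕ => s ^ n / n !) 2).mpr hrs
  have hre : Real.exp s - 1 - s = ∑' n : ℕ, s ^ (n + 2) / (n + 2)! := by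
    rw [real_exp_eq_tsum, Summable.tsum_eq_zero_add hrs, Summable.tsum_eq_zero_add hrs1]
    have e0 : s ^ 0 / (0 ! : ℝ) = 1 := by simp
    have e1 : s ^ (0 + 1) / ((0 + 1)! : ℝ) = s := by simp
    rw [e0, e1]
    have : (fun n : ℕ => s ^ (n + 1 + 1) / ((n + 1 + 1)! : ℝ))
        = fun n : ℕ => s ^ (n + 2) / ((n + 2)! : ℝ) := rfl
    rw [this]
    ring
  have hR : s ^ 2 / 2 * Real.exp s = ∑' n : ℕ, s ^ 2 / 2 * (s ^ n / n !) := by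
    rw [real_exp_eq_tsum, tsum_mul_left]
  rw [hre, hR]
  refine hrs2.tsum_le_tsum (fun n => ?_) (hrs.mul_left _)
  have hfac : (2 : ℝ) * n ! ≤ ((n + 2)! : ℝ) := by
    have h : 2 * n ! ≤ (n + 2)! := by
      have h1 : (n + 2)! = (n + 2) * ((n + 1) * n !) := by
        rw [show n + 2 = (n + 1) + 1 from rfl, Nat.factorial_succ, Nat.factorial_succ]
      rw [h1]
      calc 2 * n ! ≤ (n + 2) * n ! := Nat.mul_le_mul (by omega) le_rfl
        _ ≤ (n + 2) * ((n + 1) * n !) :=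
          Nat.mul_le_mul le_rfl (Nat.le_mul_of_pos_left _ (by omega))
    exact_mod_cast h
  have h2 : (0 : ℝ) < ((n + 2)! : ℝ) := by positivity
  have hfn : (0 : ℝ) < (n ! : ℝ) := by positivity
  rw [div_le_iff₀ h2]
  calc s ^ (n + 2) = s ^ 2 / 2 * (s ^ n / n !) * (2 * n !) := by field_simp; ring
    _ ≤ s ^ 2 / 2 * (s ^ n / n !) * ((n + 2)! : ℝ) := by
        refine mul_le_mul_of_nonneg_left hfac ?_
        positivity

lemma list_norm_sum_le {A : Type*} [NormedRing A] {Λ : ℝ} :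
    ∀ (l : List A), (∀ a ∈ l, ‖a‖ ≤ Λ) → ‖l.sum‖ ≤ l.length * Λ
  | [], _ => by simp
  | a :: l, h => by
    have ih := list_norm_sum_le l (fun b hb => h b (List.mem_cons_of_mem a hb))
    calc ‖(a :: l).sum‖ = ‖a + l.sum‖ := by simp
      _ ≤ ‖a‖ + ‖l.sum‖ := norm_add_le _ _
      _ ≤ Λ + l.length * Λ := add_le_add (h a (List.mem_cons_self)) ih
      _ = (a :: l).length * Λ := by simp; ring

/-- Key product bound by induction on the list. -/
lemma prod_exp_bound
    {A : Type*} [NormedRing A] [NormedAlgebra ℝ A] [CompleteSpace A]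
    (τ Λ : ℝ) (hτ : 0 ≤ τ) (hΛ : 0 ≤ Λ) :
    ∀ (l : List A), (∀ a ∈ l, ‖a‖ ≤ Λ) →
      ‖(l.map fun a => exp (τ • a)).prod - 1 - τ • l.sum‖
        ≤ Real.exp (l.length * (τ * Λ)) - 1 - l.length * (τ * Λ)
  | [], _ => by simp
  | a :: l, h => by
    set t : ℝ := τ * Λ with ht
    have htnn : 0 ≤ t := mul_nonneg hτ hΛ
    set n : ℕ := l.length with hn
    have ih := prod_exp_bound τ Λ hτ hΛ l (fun b hb => h b (List.mem_cons_of_mem a hb))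
    set P : A := (l.map fun a => exp (τ • a)).prod with hP
    set x : A := τ • a with hxdef
    set y : A := τ • l.sum with hydef
    set r : A := exp x - 1 - x with hrdef
    set R : A := P - 1 - y with hRdef
    have hx : ‖x‖ ≤ t := by
      rw [hxdef, norm_smul, Real.norm_eq_abs, abs_of_nonneg hτ]
      exact mul_le_mul_of_nonneg_left (h a (List.mem_cons_self)) hτ
    have hy : ‖y‖ ≤ n * t := by
      rw [hydef, norm_smul, Real.norm_eq_abs, abs_of_nonneg hτ]
      calc τ * ‖l.sum‖ ≤ τ * (n * Λ) := by
            exact mul_le_mul_of_nonneg_left (list_norm_sum_le l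
              (fun b hb => h b (List.mem_cons_of_mem a hb))) hτ
        _ = n * t := by ring
    have hr : ‖r‖ ≤ Real.exp t - 1 - t := by
      calc ‖r‖ ≤ Real.exp ‖x‖ - 1 - ‖x‖ := norm_exp_sub_one_sub_le x
        _ ≤ Real.exp t - 1 - t := tail_mono (norm_nonneg x) hx
    have hR : ‖R‖ ≤ Real.exp (n * t) - 1 - n * t := ih
    have hnt : (0 : ℝ) ≤ n * t := by positivity
    have hexpand :
        ((a :: l).map fun a => exp (τ • a)).prod - 1 - τ • (a :: l).sum
          = R + x * y + x * R + r + r * y + r * R := by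
      have h1 : ((a :: l).map fun a => exp (τ • a)).prod = exp x * P := by
        simp [hP, hxdef]
      have h2 : τ • (a :: l).sum = x + y := by
        simp [hxdef, hydef, smul_add]
      rw [h1, h2]
      have hexp : exp x = 1 + x + r := by rw [hrdef]; abel
      have hPeq : P = 1 + y + R := by rw [hRdef]; abel
      rw [hexp, hPeq]
      noncomm_ring
    rw [hexpand]
    set ε : ℝ := Real.exp t - 1 - t with hε
    set E : ℝ := Real.exp (n * t) - 1 - n * t with hE
    have hεnn : 0 ≤ ε := by
      have := Real.add_one_le_exp t
      simp only [hε]; linarith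
    have hEnn : 0 ≤ E := by
      have := Real.add_one_le_exp (n * t)
      simp only [hE]; linarith
    have key : E + t * (n * t) + t * E + ε + ε * (n * t) + ε * E
        = Real.exp ((n + 1) * t) - 1 - (n + 1) * t := by
      have : Real.exp ((n + 1) * t) = Real.exp (n * t) * Real.exp t := by
        rw [← Real.exp_add]; ring_nf
      rw [this, hε, hE]; ring
    calc ‖R + x * y + x * R + r + r * y + r * R‖
        ≤ ‖R‖ + ‖x‖ * ‖y‖ + ‖x‖ * ‖R‖ + ‖r‖ + ‖r‖ * ‖y‖ + ‖r‖ * ‖R‖ := by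
          refine le_trans (norm_add_le _ _) ?_
          refine add_le_add ?_ (norm_mul_le _ _)
          refine le_trans (norm_add_le _ _) ?_
          refine add_le_add ?_ (norm_mul_le _ _)
          refine le_trans (norm_add_le _ _) ?_
          refine add_le_add ?_ le_rfl
          refine le_trans (norm_add_le _ _) ?_
          refine add_le_add ?_ (norm_mul_le _ _)
          refine le_trans (norm_add_le _ _) ?_
          exact add_le_add le_rfl (norm_mul_le _ _)
      _ ≤ E + t * (n * t) + t * E + ε + ε * (n * t) + ε * E := by
          have h1 : ‖x‖ * ‖y‖ ≤ t * (n * t) :=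
            mul_le_mul hx hy (norm_nonneg _) htnn
          have h2 : ‖x‖ * ‖R‖ ≤ t * E :=
            mul_le_mul hx hR (norm_nonneg _) htnn
          have h3 : ‖r‖ * ‖y‖ ≤ ε * (n * t) :=
            mul_le_mul hr hy (norm_nonneg _) hεnn
          have h4 : ‖r‖ * ‖R‖ ≤ ε * E :=
            mul_le_mul hr hR (norm_nonneg _) hεnn
          linarith
      _ = Real.exp ((n + 1) * t) - 1 - (n + 1) * t := key
      _ = Real.exp ((a :: l).length * (τ * Λ)) - 1 - (a :: l).length * (τ * Λ) := by
          rw [List.length_cons, ← hn, ← ht]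
          push_cast
          ring_nf

theorem first_order_trotter_step_bound
    {A : Type*} [NormedRing A] [NormedAlgebra ℝ A] [CompleteSpace A]
    (M : ℕ) (L : Fin M → A) (Λ τ : ℝ) (hτ : 0 ≤ τ)
    (hL : ∀ k, ‖L k‖ ≤ Λ) :
    ‖exp (τ • ∑ k, L k) - (List.ofFn fun k => exp (τ • L k)).prod‖
      ≤ ((M : ℝ) * τ * Λ) ^ 2 * Real.exp ((M : ℝ) * τ * Λ) := by
  rcases Nat.eq_zero_or_pos M with hM | hM
  · subst hM
    simp [exp_zero]
  have hΛ : 0 ≤ Λ := le_trans (norm_nonneg (L ⟨0, hM⟩)) (hL _)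
  set l : List A := List.ofFn L with hl
  have hmem : ∀ a ∈ l, ‖a‖ ≤ Λ := by
    intro a ha
    rw [hl, List.mem_ofFn] at ha
    obtain ⟨k, rfl⟩ := ha
    exact hL k
  have hlen : l.length = M := by rw [hl, List.length_ofFn]
  have hsum : ∑ k, L k = l.sum := by rw [hl, List.sum_ofFn]
  have hprod : (List.ofFn fun k => exp (τ • L k)).prod
      = (l.map fun a => exp (τ • a)).prod := by
    rw [hl, List.map_ofFn]
    rfl
  set T : ℝ := (M : ℝ) * τ * Λ with hT
  have hTnn : 0 ≤ T := by positivity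
  have hTeq : (l.length : ℝ) * (τ * Λ) = T := by rw [hlen, hT]; ring
  have h1 : ‖exp (τ • ∑ k, L k) - 1 - τ • ∑ k, L k‖ ≤ Real.exp T - 1 - T := by
    refine le_trans (norm_exp_sub_one_sub_le _) (tail_mono (norm_nonneg _) ?_)
    rw [norm_smul, Real.norm_eq_abs, abs_of_nonneg hτ, hsum]
    calc τ * ‖l.sum‖ ≤ τ * (l.length * Λ) :=
          mul_le_mul_of_nonneg_left (list_norm_sum_le l hmem) hτ
      _ = T := by rw [hlen, hT]; ring
  have h2 : ‖(List.ofFn fun k => exp (τ • L k)).prod - 1 - τ • ∑ k, L k‖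
      ≤ Real.exp T - 1 - T := by
    rw [hprod, hsum]
    have := prod_exp_bound τ Λ hτ hΛ l hmem
    rwa [hTeq] at this
  have htail := real_tail_le T hTnn
  calc ‖exp (τ • ∑ k, L k) - (List.ofFn fun k => exp (τ • L k)).prod‖
      = ‖(exp (τ • ∑ k, L k) - 1 - τ • ∑ k, L k)
          - ((List.ofFn fun k => exp (τ • L k)).prod - 1 - τ • ∑ k, L k)‖ := by
        congr 1; abel
    _ ≤ ‖exp (τ • ∑ k, L k) - 1 - τ • ∑ k, L k‖
        + ‖(List.ofFn fun k => exp (τ • L k)).prod - 1 - τ • ∑ k, L k‖ := norm_sub_le _ _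
    _ ≤ (Real.exp T - 1 - T) + (Real.exp T - 1 - T) := add_le_add h1 h2
    _ ≤ T ^ 2 * Real.exp T := by linarith
end
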